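/- Let n ≥ 2. For the diagonal generalized Gell-Mann matrices Λ^{(d)} = √(2/(d(d+1))) (Σ_{p=1}^{d} E_{pp} − d E_{d+1,d+1}), 1 ≤ d ≤ n−1, one has Σ_{d=1}^{n−1} Λ^{(d)} ⊗ Λ^{(d)} = −(2/n) I_n ⊗ I_n + 2 Σ_{i=1}^{n} E_{ii} ⊗ E_{ii}; equivalently, its ((l₁,l₂),(k₁,k₂)) entry equals −(2/n) δ^{l₁}_{k₁} δ^{l₂}_{k₂} + 2 Σ_{i=1}^{n} δ^{i l₁} δ^{i}_{k₁} δ^{i l₂} δ^{i}_{k₂}. -/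

import Mathlib

/-!
All the matrices involved are diagonal, so the identity is one between diagonal entries. Up to the
normalisation, the `i`-th diagonal entry of `Λ^{(d)}` is `1` for `i < d`, `-d` for `i = d` and `0`
for `i > d`. For `d > max i j` the product of the entries at `i` and `j` contributes
`2/(d(d+1)) = 2/d - 2/(d+1)`, which telescopes to `2/(max i j + 1) - 2/n`; the single term
`d = max i j` contributes `2 (max i j)/(max i j + 1)` if `i = j` and `-2/(max i j + 1)` otherwise.
-/

open Matrix Kronecker

/-- The diagonal generalized Gell-Mann matrix
`Λ^{(d)} = √(2/(d(d+1))) (Σ_{p=1}^{d} E_{pp} - d E_{d+1,d+1})`, for `1 ≤ d ≤ n-1`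
(zero-based indices: the paper's `E_{pp}`, `1 ≤ p ≤ d`, are the
`stdBasisMatrix p p 1` with `p < d`, and the paper's `E_{d+1,d+1}` is
`stdBasisMatrix d d 1`). -/
noncomputable def lamD (n : ℕ) (d : Fin n) : Matrix (Fin n) (Fin n) ℂ :=
  ((Real.sqrt (2 / (((d : ℕ) : ℝ) * (((d : ℕ) : ℝ) + 1))) : ℝ) : ℂ) •
    ((∑ p : Fin n, if p < d then single p p (1 : ℂ) else 0)
      - (((d : ℕ) : ℂ)) • single d d 1)

def gellMannCoeff {K : Type*} [Field K] (d a : ℕ) : K :=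
  (if a < d then 1 else 0) - if a = d then (d : K) else 0

theorem sum_range_gellMannCoeff_mul {K : Type*} [Field K] [CharZero K] (a b n : ℕ) :
    ∑ d ∈ Finset.range n, 2 / ((d : K) * (d + 1)) * gellMannCoeff d a * gellMannCoeff d b
      = if a < n ∧ b < n then (if a = b then 2 else 0) - 2 / (n : K) else 0 := by
  induction n with
  | zero => simp
  | succ n ih =>
    rw [Finset.sum_range_succ, ih]
    have hn1 : (n : K) + 1 ≠ 0 := by norm_cast
    unfold gellMannCoeff
    rcases Nat.eq_zero_or_pos n with rfl | hn
    · simp only [zero_add]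
      split_ifs <;> first | omega | norm_num
    have hn0 : (n : K) ≠ 0 := Nat.cast_ne_zero.mpr hn.ne'
    push_cast
    split_ifs <;> first | omega | (field_simp; ring)

theorem diagonal_finset_sum {ι n α : Type*} [DecidableEq n] [AddCommMonoid α] (s : Finset ι)
    (f : ι → n → α) : ∑ i ∈ s, diagonal (f i) = diagonal (∑ i ∈ s, f i) :=
  (map_sum (diagonalAddMonoidHom n α) f s).symm

theorem sum_single_kronecker_single {ι α : Type*} [Fintype ι] [DecidableEq ι] [Semiring α] :
    ∑ i : ι, single i i (1 : α) ⊗ₖ single i i 1 = diagonal fun p => if p.1 = p.2 then 1 else 0 := by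
  simp_rw [single_kronecker_single, mul_one, ← diagonal_single]
  rw [diagonal_finset_sum]
  congr 1
  ext ⟨j, k⟩
  rcases eq_or_ne j k with rfl | hjk
  · simp [Finset.sum_apply, Pi.single_apply, Prod.ext_iff]
  · rw [if_neg hjk, Finset.sum_apply]
    refine Finset.sum_eq_zero fun i _ => Pi.single_eq_of_ne (fun h => hjk ?_) _
    simp only [Prod.mk.injEq] at h
    exact h.1.trans h.2.symm

theorem lamD_eq_diagonal (n : ℕ) (d : Fin n) :
    lamD n d = diagonal fun i : Fin n =>
      ((Real.sqrt (2 / ((d : ℕ) * ((d : ℕ) + 1))) : ℝ) : ℂ) * gellMannCoeff d (i : ℕ) := by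
  ext i j
  simp only [lamD, Matrix.smul_apply, Matrix.sub_apply, Matrix.sum_apply, diagonal_apply,
    apply_ite (fun M : Matrix (Fin n) (Fin n) ℂ => M i j), Matrix.zero_apply, single_apply]
  rw [Finset.sum_eq_single i (fun c _ hc => by simp [hc]) (by simp)]
  rcases eq_or_ne i j with rfl | hij
  · simp [gellMannCoeff, Fin.val_inj, eq_comm]
  · have hd : ¬(d = i ∧ d = j) := fun h => hij (h.1 ▸ h.2)
    simp [hij, hd]

theorem lamD_kronecker_self (n : ℕ) (d : Fin n) :
    lamD n d ⊗ₖ lamD n d = diagonal fun p : Fin n × Fin n =>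
      2 / (((d : ℕ) : ℂ) * ((d : ℕ) + 1)) * gellMannCoeff d (p.1 : ℕ) * gellMannCoeff d (p.2 : ℕ) := by
  rw [lamD_eq_diagonal, diagonal_kronecker_diagonal]
  congr 1
  ext p
  have hsq : ((Real.sqrt (2 / (((d : ℕ) : ℝ) * ((d : ℕ) + 1))) : ℝ) : ℂ) ^ 2
      = 2 / (((d : ℕ) : ℂ) * ((d : ℕ) + 1)) := by
    rw [← Complex.ofReal_pow, Real.sq_sqrt (by positivity)]
    push_cast
    rfl
  rw [← hsq]
  ring

theorem sum_lamD_kronecker_self (n : ℕ) :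
    ∑ d : Fin n, lamD n d ⊗ₖ lamD n d
      = diagonal fun p : Fin n × Fin n => (if p.1 = p.2 then 2 else 0) - 2 / (n : ℂ) := by
  simp_rw [lamD_kronecker_self, diagonal_finset_sum]
  congr 1
  ext p
  rw [Finset.sum_apply, Fin.sum_univ_eq_sum_range (fun d =>
      2 / ((d : ℂ) * (d + 1)) * gellMannCoeff d (p.1 : ℕ) * gellMannCoeff d (p.2 : ℕ)) n,
    sum_range_gellMannCoeff_mul, if_pos ⟨p.1.isLt, p.2.isLt⟩]
  simp [Fin.val_inj]

theorem stmt5_general (n : ℕ) :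
    (∑ d : Fin n, if (d : ℕ) ≠ 0 then lamD n d ⊗ₖ lamD n d else 0)
      = (-(2 / (n : ℂ))) • ((1 : Matrix (Fin n) (Fin n) ℂ) ⊗ₖ (1 : Matrix (Fin n) (Fin n) ℂ))
        + (2 : ℂ) • ∑ i : Fin n, single i i (1 : ℂ) ⊗ₖ single i i (1 : ℂ) := by
  have hzero (d : Fin n) (hd : ¬(d : ℕ) ≠ 0) : (0 : Matrix _ _ ℂ) = lamD n d ⊗ₖ lamD n d := by
    simp [lamD, not_not.mp hd]
  calc (∑ d : Fin n, if (d : ℕ) ≠ 0 then lamD n d ⊗ₖ lamD n d else 0)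
      = ∑ d : Fin n, lamD n d ⊗ₖ lamD n d :=
        Finset.sum_congr rfl fun d _ => ite_eq_left_iff.mpr (hzero d)
    _ = diagonal fun p : Fin n × Fin n => (if p.1 = p.2 then 2 else 0) - 2 / (n : ℂ) :=
        sum_lamD_kronecker_self n
    _ = _ := by
        rw [one_kronecker_one, sum_single_kronecker_single, ← diagonal_one, ← diagonal_smul,
          ← diagonal_smul, diagonal_add]
        congr 1
        ext p
        simp only [Pi.smul_apply, smul_eq_mul]
        split_ifs <;> ring

/-- `Σ_{d=1}^{n-1} Λ^{(d)} ⊗ Λ^{(d)}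
  = -(2/n) Iₙ ⊗ Iₙ + 2 Σ_{i=1}^{n} E_{ii} ⊗ E_{ii}`. -/
theorem stmt5 (n : ℕ) (hn : 2 ≤ n) :
    (∑ d : Fin n, if (d : ℕ) ≠ 0 then lamD n d ⊗ₖ lamD n d else 0)
      = (-(2 / (n : ℂ))) • ((1 : Matrix (Fin n) (Fin n) ℂ) ⊗ₖ (1 : Matrix (Fin n) (Fin n) ℂ))
        + (2 : ℂ) • ∑ i : Fin n, single i i (1 : ℂ) ⊗ₖ single i i (1 : ℂ) :=
  stmt5_general n
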